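/- For every subset B ⊆ A and all traces u, v over a dependency alphabet, the B-view satisfies view_B(uv) = view_B(u·view_B(v)). -/

import Mathlib

namespace MazTrace

variable {A : Type*}

/-- Smallest equivalence on words over `A` generated by commuting two adjacent
independent letters (`a I b` iff `¬ D a b`). -/
inductive TraceRel (D : A → A → Prop) : List A → List A → Prop
  | refl (u : List A) : TraceRel D u u
  | swap (u v : List A) (a b : A) (h : ¬ D a b) :
      TraceRel D (u ++ a :: b :: v) (u ++ b :: a :: v)
  | symm {u v : List A} : TraceRel D u v → TraceRel D v u
  | trans {u v w : List A} : TraceRel D u v → TraceRel D v w → TraceRel D u w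

theorem TraceRel.append_right {D : A → A → Prop} {u u' : List A} (w : List A)
    (h : TraceRel D u u') : TraceRel D (u ++ w) (u' ++ w) := by
  induction h with
  | refl u => exact .refl _
  | swap x y a b hab =>
      simpa [List.append_assoc] using TraceRel.swap (D := D) x (y ++ w) a b hab
  | symm _ ih => exact ih.symm
  | trans _ _ ih1 ih2 => exact ih1.trans ih2

theorem TraceRel.append_left {D : A → A → Prop} {v v' : List A} (w : List A)
    (h : TraceRel D v v') : TraceRel D (w ++ v) (w ++ v') := by
  induction h with
  | refl u => exact .refl _
  | swap x y a b hab =>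
      simpa [List.append_assoc] using TraceRel.swap (D := D) (w ++ x) y a b hab
  | symm _ ih => exact ih.symm
  | trans _ _ ih1 ih2 => exact ih1.trans ih2

def traceSetoid (D : A → A → Prop) : Setoid (List A) :=
  ⟨TraceRel D, ⟨TraceRel.refl, TraceRel.symm, TraceRel.trans⟩⟩

/-- A Mazurkiewicz trace: an equivalence class of words. -/
def Trace (D : A → A → Prop) : Type _ := Quotient (traceSetoid D)

namespace Trace

variable {D : A → A → Prop}

/-- The trace of a word. -/
def mk (D : A → A → Prop) (u : List A) : Trace D := Quotient.mk (traceSetoid D) u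

/-- The empty trace. -/
instance : One (Trace D) := ⟨mk D []⟩

/-- Concatenation of traces, induced by concatenation of words. -/
instance : Mul (Trace D) :=
  ⟨fun s t => Quotient.liftOn₂ s t (fun u v => mk D (u ++ v))
    (fun _ _ _ _ hu hv =>
      Quotient.sound ((hu.append_right _).trans (TraceRel.append_left _ hv)))⟩

instance : Nonempty (Trace D) := ⟨1⟩

/-- Length of a trace: the length of any of its linearizations. -/
def length (t : Trace D) : ℕ :=
  Quotient.liftOn t List.length (by
    intro u v h
    induction h with
    | refl u => rfl
    | swap x y a b hab => simp
    | symm _ ih => exact ih.symm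
    | trans _ _ ih1 ih2 => exact ih1.trans ih2)

/-- The set of letters of a trace. -/
def alph (t : Trace D) : Set A :=
  Quotient.liftOn t (fun u => {a | a ∈ u}) (by
    intro u v h
    induction h with
    | refl u => rfl
    | swap x y a b hab => ext c; simp [List.mem_append]; tauto
    | symm _ ih => exact ih.symm
    | trans _ _ ih1 ih2 => exact ih1.trans ih2)

/-- Prefix order on traces: `s ⊑ t` iff `s * w = t` for some trace `w`. -/
def Prefix (s t : Trace D) : Prop := ∃ w, s * w = t

/-- `t I B` : every letter of the trace `t` is independent of every element of `B`. -/
def IndepSet (t : Trace D) (B : Set A) : Prop := ∀ a ∈ t.alph, ∀ b ∈ B, ¬ D a b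

/-- `s I t` : every letter of `s` is independent of every letter of `t`. -/
def Indep (s t : Trace D) : Prop := ∀ a ∈ s.alph, ∀ b ∈ t.alph, ¬ D a b

/-- `a I t` : the letter `a` is independent of every letter of the trace `t`. -/
def IndepLetter (a : A) (t : Trace D) : Prop := ∀ c ∈ t.alph, ¬ D a c

/-- `w` is the `B`-view of `t`: the shortest prefix of `t` such that `t = w·v`
for some trace `v` with `v I B`. -/
def IsView (B : Set A) (t w : Trace D) : Prop :=
  (∃ v, w * v = t ∧ v.IndepSet B) ∧
  ∀ w' v', w' * v' = t → v'.IndepSet B → w.length ≤ w'.length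

/-- The `B`-view of a trace. -/
noncomputable def view (B : Set A) (t : Trace D) : Trace D :=
  Classical.epsilon (IsView B t)

/-- A trace is `B`-prime if every linearization of it ends with a letter of `B`. -/
def IsBPrime (B : Set A) (t : Trace D) : Prop :=
  ∀ u : List A, mk D u = t → ∀ a : A, u.getLast? = some a → a ∈ B

/-- A trace is prime if all its linearizations have the same last letter
(the empty trace counts as prime). -/
def IsPrime (t : Trace D) : Prop :=
  ∀ u v : List A, mk D u = t → mk D v = t → u.getLast? = v.getLast?

end Trace

end MazTrace

/-!
Two words are equivalent iff their projections onto every pair of dependent letters agree. This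
makes the trace monoid right-cancellative and lets one locate, in any word `z ≈ t c`, an
occurrence of `c` followed only by letters independent of `c`. Hence if `w s = t c` then the
final `c` can be taken from `s`, or else from `w`. In the second case `w = w' c` is not of
minimal length among the prefixes of `t c` with `B`-independent rest, provided `c I B`; so
appending a `B`-independent trace does not change the `B`-view. Finally `v = view_B(v) r` with
`r I B`.
-/

namespace MazTrace

variable {A : Type*} {D : A → A → Prop}

lemma exists_eq_append_cons_notMem {x : A} :
    ∀ {v : List A}, x ∈ v → ∃ v₁ v₂, v = v₁ ++ x :: v₂ ∧ x ∉ v₂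
  | y :: v, h => by
    by_cases hx : x ∈ v
    · obtain ⟨v₁, v₂, rfl, hx₂⟩ := exists_eq_append_cons_notMem hx
      exact ⟨y :: v₁, v₂, rfl, hx₂⟩
    · obtain rfl : x = y := by simpa [hx] using h
      exact ⟨[], v, rfl, hx⟩

lemma traceRel_append_cons (l₁ l₂ : List A) {c : A} (h : ∀ y ∈ l₂, ¬ D c y) :
    TraceRel D (l₁ ++ c :: l₂) (l₁ ++ l₂ ++ [c]) := by
  rw [List.append_assoc]
  refine TraceRel.append_left l₁ ?_
  induction l₂ with
  | nil => exact .refl _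
  | cons y l₂ ih =>
    have hswap : TraceRel D (c :: y :: l₂) (y :: c :: l₂) :=
      TraceRel.swap [] l₂ c y (h y List.mem_cons_self)
    exact hswap.trans (TraceRel.append_left [y] (ih fun z hz => h z (.tail _ hz)))

section Projection

variable [DecidableEq A]

def proj (a b : A) (u : List A) : List A := u.filter (fun x => x = a ∨ x = b)

@[simp]
lemma proj_append (a b : A) (u v : List A) :
    proj a b (u ++ v) = proj a b u ++ proj a b v :=
  List.filter_append _ _

lemma mem_proj {a b x : A} {u : List A} : x ∈ proj a b u ↔ x ∈ u ∧ (x = a ∨ x = b) := by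
  simp [proj]

lemma TraceRel.proj_eq (hsymm : ∀ a b, D a b → D b a) {u v : List A} (h : TraceRel D u v)
    {a b : A} (hab : D a b) : proj a b u = proj a b v := by
  induction h with
  | refl => rfl
  | swap x y p q hpq =>
    have hpq_eq : (p = a ∨ p = b) → (q = a ∨ q = b) → p = q := by
      rintro (rfl | rfl) (rfl | rfl)
      exacts [rfl, absurd hab hpq, absurd (hsymm _ _ hab) hpq, rfl]
    by_cases hp : p = a ∨ p = b <;> by_cases hq : q = a ∨ q = b <;>
      simp [proj, hp, hq, hpq_eq]
  | symm _ ih => exact ih.symm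
  | trans _ _ ih₁ ih₂ => exact ih₁.trans ih₂

/-- On `{x, y}` with `D x y` both projections end in `x`, so no `y` follows the last `x` of `v`. -/
lemma exists_eq_append_cons_of_proj_eq (hrefl : ∀ a, D a a) {u v : List A} {x : A}
    (h : ∀ a b, D a b → proj a b (u ++ [x]) = proj a b v) :
    ∃ v₁ v₂, v = v₁ ++ x :: v₂ ∧ ∀ y ∈ v₂, ¬ D x y := by
  have hxv : x ∈ v := by
    have hx : x ∈ proj x x (u ++ [x]) := mem_proj.2 ⟨by simp, .inl rfl⟩
    exact (mem_proj.1 (h x x (hrefl x) ▸ hx)).1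
  obtain ⟨v₁, v₂, rfl, hx₂⟩ := exists_eq_append_cons_notMem hxv
  refine ⟨v₁, v₂, rfl, fun y hy hxy => ?_⟩
  have hlast : (proj x y (u ++ [x])).getLast? = (proj x y (v₁ ++ [x] ++ v₂)).getLast? := by
    simpa using congrArg List.getLast? (h x y hxy)
  obtain ⟨z, hz⟩ : ∃ z, (proj x y v₂).getLast? = some z :=
    Option.isSome_iff_exists.1 (List.getLast?_isSome.2
      (List.ne_nil_of_mem (mem_proj.2 ⟨hy, .inr rfl⟩)))
  have hzv₂ : z ∈ v₂ := (mem_proj.1 (List.mem_of_getLast? hz)).1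
  rw [proj_append, List.getLast?_append, proj_append, List.getLast?_append, hz] at hlast
  have hxz : x = z := by simpa [proj] using hlast
  exact hx₂ (hxz ▸ hzv₂)

lemma traceRel_of_proj_eq (hrefl : ∀ a, D a a) (hsymm : ∀ a b, D a b → D b a) (u : List A) :
    ∀ v : List A, (∀ a b, D a b → proj a b u = proj a b v) → TraceRel D u v := by
  induction u using List.reverseRecOn with
  | nil =>
    rintro (_ | ⟨y, v⟩) h
    · exact .refl _
    · simpa [proj] using h y y (hrefl y)
  | append_singleton u x ih =>
    intro v h
    obtain ⟨v₁, v₂, rfl, hx₂⟩ := exists_eq_append_cons_of_proj_eq hrefl h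
    have hmove := traceRel_append_cons v₁ v₂ hx₂
    have hrest : TraceRel D u (v₁ ++ v₂) := ih _ fun a b hab =>
      List.append_cancel_right (by simpa using (h a b hab).trans (hmove.proj_eq hsymm hab))
    exact (hrest.append_right [x]).trans hmove.symm

end Projection

namespace Trace

lemma mk_mul_mk (u v : List A) : mk D u * mk D v = mk D (u ++ v) := rfl

lemma mk_eq_mk {u v : List A} : mk D u = mk D v ↔ TraceRel D u v :=
  ⟨fun h => Quotient.exact h, fun h => Quotient.sound h⟩

lemma exists_mk (t : Trace D) : ∃ u, mk D u = t := Quotient.exists_rep t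

lemma length_mk (u : List A) : (mk D u).length = u.length := rfl

lemma one_def : (1 : Trace D) = mk D [] := rfl

protected lemma mul_assoc (s t r : Trace D) : s * t * r = s * (t * r) := by
  obtain ⟨a, rfl⟩ := exists_mk s
  obtain ⟨b, rfl⟩ := exists_mk t
  obtain ⟨c, rfl⟩ := exists_mk r
  simp only [mk_mul_mk, List.append_assoc]

protected lemma mul_one (t : Trace D) : t * 1 = t := by
  obtain ⟨a, rfl⟩ := exists_mk t
  rw [one_def, mk_mul_mk, List.append_nil]

lemma length_mul (s t : Trace D) : (s * t).length = s.length + t.length := by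
  obtain ⟨a, rfl⟩ := exists_mk s
  obtain ⟨b, rfl⟩ := exists_mk t
  exact List.length_append

lemma indepSet_mk {u : List A} {B : Set A} :
    (mk D u).IndepSet B ↔ ∀ a ∈ u, ∀ b ∈ B, ¬ D a b := Iff.rfl

lemma indepSet_mul {s t : Trace D} {B : Set A} :
    (s * t).IndepSet B ↔ s.IndepSet B ∧ t.IndepSet B := by
  obtain ⟨a, rfl⟩ := exists_mk s
  obtain ⟨b, rfl⟩ := exists_mk t
  simp only [mk_mul_mk, indepSet_mk, List.forall_mem_append]

lemma mk_append_cons (l₁ l₂ : List A) {c : A} (h : ∀ y ∈ l₂, ¬ D c y) :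
    mk D (l₁ ++ c :: l₂) = mk D (l₁ ++ l₂) * mk D [c] :=
  mk_eq_mk.2 (traceRel_append_cons l₁ l₂ h)

lemma mul_letter_cancel (hrefl : ∀ a, D a a) (hsymm : ∀ a b, D a b → D b a)
    {s t : Trace D} {c : A} (h : s * mk D [c] = t * mk D [c]) : s = t := by
  classical
  obtain ⟨u, rfl⟩ := exists_mk s
  obtain ⟨v, rfl⟩ := exists_mk t
  refine mk_eq_mk.2 (traceRel_of_proj_eq hrefl hsymm u v fun a b hab => ?_)
  simpa using (mk_eq_mk.1 h).proj_eq hsymm hab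

lemma exists_eq_append_cons_of_mk_eq (hrefl : ∀ a, D a a) (hsymm : ∀ a b, D a b → D b a)
    {z : List A} {t : Trace D} {c : A} (h : mk D z = t * mk D [c]) :
    ∃ z₁ z₂, z = z₁ ++ c :: z₂ ∧ (∀ y ∈ z₂, ¬ D c y) ∧ mk D (z₁ ++ z₂) = t := by
  classical
  obtain ⟨u, rfl⟩ := exists_mk t
  obtain ⟨z₁, z₂, rfl, hc⟩ := exists_eq_append_cons_of_proj_eq hrefl
    fun a b hab => ((mk_eq_mk.1 h).proj_eq hsymm hab).symm
  exact ⟨z₁, z₂, rfl, hc, mul_letter_cancel hrefl hsymm ((mk_append_cons z₁ z₂ hc).symm.trans h)⟩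

lemma mul_eq_mul_letter (hrefl : ∀ a, D a a) (hsymm : ∀ a b, D a b → D b a)
    {w s t : Trace D} {c : A} (h : w * s = t * mk D [c]) :
    (∃ s', s = s' * mk D [c] ∧ w * s' = t) ∨ ∃ w', w = w' * mk D [c] ∧ w' * s = t := by
  obtain ⟨wl, rfl⟩ := exists_mk w
  obtain ⟨sl, rfl⟩ := exists_mk s
  obtain ⟨z₁, z₂, hz, hc, rfl⟩ := exists_eq_append_cons_of_mk_eq hrefl hsymm h
  rcases List.append_eq_append_iff.1 hz with ⟨a, rfl, rfl⟩ | ⟨b, rfl, hb⟩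
  · exact .inl ⟨mk D (a ++ z₂), mk_append_cons a z₂ hc, by simp [mk_mul_mk]⟩
  · rcases List.cons_eq_append_iff.1 hb with ⟨rfl, rfl⟩ | ⟨b, rfl, rfl⟩
    · exact .inl ⟨mk D z₂, mk_append_cons [] z₂ hc, by simp [mk_mul_mk]⟩
    · refine .inr ⟨mk D (z₁ ++ b), mk_append_cons z₁ b fun y hy => hc y (by simp [hy]), ?_⟩
      simp [mk_mul_mk]

def HasIndepRest (B : Set A) (t w : Trace D) : Prop := ∃ v, w * v = t ∧ v.IndepSet B

lemma isView_iff {B : Set A} {t w : Trace D} :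
    IsView B t w ↔ HasIndepRest B t w ∧ ∀ w', HasIndepRest B t w' → w.length ≤ w'.length := by
  simp only [IsView, HasIndepRest, forall_exists_index, and_imp]

lemma exists_isView (B : Set A) (t : Trace D) : ∃ w, IsView B t w := by
  classical
  have hne : ∃ n, ∃ w, HasIndepRest B t w ∧ w.length = n :=
    ⟨t.length, t, ⟨1, Trace.mul_one t, by simp [one_def, indepSet_mk]⟩, rfl⟩
  obtain ⟨w, hw, hlen⟩ := Nat.find_spec hne
  exact ⟨w, isView_iff.2 ⟨hw, fun w' hw' => hlen ▸ Nat.find_min' hne ⟨w', hw', rfl⟩⟩⟩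

lemma isView_view (B : Set A) (t : Trace D) : IsView B t (view B t) :=
  Classical.epsilon_spec (exists_isView B t)

lemma isView_eq_of_hasIndepRest {B : Set A} {t t' : Trace D}
    (h₁ : ∀ w, HasIndepRest B t w → HasIndepRest B t' w)
    (h₂ : ∀ w, HasIndepRest B t' w →
      HasIndepRest B t w ∨ ∃ w', HasIndepRest B t w' ∧ w'.length < w.length) :
    IsView B t' = IsView B t := by
  funext w
  simp only [isView_iff, eq_iff_iff]
  constructor
  · rintro ⟨hw, hmin⟩
    rcases h₂ w hw with hw | ⟨w', hw', hlt⟩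
    · exact ⟨hw, fun w' hw' => hmin w' (h₁ w' hw')⟩
    · exact absurd (hmin w' (h₁ w' hw')) hlt.not_ge
  · rintro ⟨hw, hmin⟩
    refine ⟨h₁ w hw, fun w' hw' => ?_⟩
    rcases h₂ w' hw' with hw' | ⟨w'', hw'', hlt⟩
    exacts [hmin w' hw', (hmin w'' hw'').trans hlt.le]

lemma isView_mul_letter (hrefl : ∀ a, D a a) (hsymm : ∀ a b, D a b → D b a)
    {B : Set A} {c : A} (hc : (mk D [c]).IndepSet B) (t : Trace D) :
    IsView B (t * mk D [c]) = IsView B t := by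
  refine isView_eq_of_hasIndepRest (fun w ⟨v, hwv, hv⟩ =>
    ⟨v * mk D [c], by rw [← Trace.mul_assoc, hwv], indepSet_mul.2 ⟨hv, hc⟩⟩) ?_
  rintro w ⟨s, hws, hs⟩
  rcases mul_eq_mul_letter hrefl hsymm hws with ⟨s', rfl, hws'⟩ | ⟨w', rfl, hw's⟩
  · exact .inl ⟨s', hws', (indepSet_mul.1 hs).1⟩
  · exact .inr ⟨w', ⟨s, hw's, hs⟩, by simp [length_mul, length_mk]⟩

lemma view_mul_of_indepSet (hrefl : ∀ a, D a a) (hsymm : ∀ a b, D a b → D b a)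
    {B : Set A} {r : Trace D} (hr : r.IndepSet B) (t : Trace D) :
    view B (t * r) = view B t := by
  obtain ⟨l, rfl⟩ := exists_mk r
  induction l using List.reverseRecOn generalizing t with
  | nil => rw [← one_def, Trace.mul_one]
  | append_singleton l c ih =>
    rw [← mk_mul_mk] at hr ⊢
    rw [← Trace.mul_assoc, view, isView_mul_letter hrefl hsymm (indepSet_mul.1 hr).2]
    exact ih t (indepSet_mul.1 hr).1

end Trace

end MazTrace

open MazTrace in
theorem view_mul_view_general {A : Type*} (D : A → A → Prop)
    (hrefl : ∀ a, D a a) (hsymm : ∀ a b, D a b → D b a)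
    (B : Set A) (u v : Trace D) :
    Trace.view B (u * v) = Trace.view B (u * Trace.view B v) := by
  obtain ⟨r, hvr, hr⟩ := (Trace.isView_iff.1 (Trace.isView_view B v)).1
  calc Trace.view B (u * v) = Trace.view B (u * Trace.view B v * r) := by
        rw [Trace.mul_assoc, hvr]
    _ = Trace.view B (u * Trace.view B v) := Trace.view_mul_of_indepSet hrefl hsymm hr _

open MazTrace in
/-- `view_B(uv) = view_B(u · view_B(v))`. -/
theorem view_mul_view {A : Type*} [Finite A] (D : A → A → Prop)
    (hrefl : ∀ a, D a a) (hsymm : ∀ a b, D a b → D b a)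
    (B : Set A) (u v : Trace D) :
    Trace.view B (u * v) = Trace.view B (u * Trace.view B v) :=
  view_mul_view_general D hrefl hsymm B u v
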